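/- Let K ⊆ ℝ^q be a polyhedral cone with K = cone B for a finite set B ⊆ ℝ^q\{0}, and let C ⊆ K be a convex cone with (K ∩ −K) ∩ C = {0}. Suppose y ∈ B satisfies y = z + c with z ∈ K, c ∈ C\{0}, and y ∉ (K ∩ −K) + C\{0}. Then y ∈ cone(B\{y}). -/

import Mathlib

/-!
Every element of `K = cone (insert y S)`, where `S = B \ {y}`, is `μ • y + w` with `μ ≥ 0` and
`w ∈ cone S`. Hence if `t • y = a + b` with `b ∈ K`, then either `μ ≥ t` and
`-a = (μ - t) • y + w ∈ K`, or `(t - μ) • y = a + w` with `t - μ > 0`.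
Applied to `y = c + z`, the first case would put `c` in `(K ∩ -K) ∩ C = {0}`, so
`t • y = c + z₁` with `z₁ ∈ cone S`. Applied to `t • y = z₁ + c`, the first case would put `z₁`
in `K ∩ -K`, and then `y = t⁻¹ • z₁ + t⁻¹ • c ∈ (K ∩ -K) + C \ {0}`; so `r • y = z₁ + w` with
`r > 0` and `z₁ + w ∈ cone S`.
-/

open Pointwise Set

/-- `cone B = {λ x : λ ≥ 0, x ∈ conv B}`, with `cone ∅ = {0}`. -/
def coneOf {q : ℕ} (B : Set (Fin q → ℝ)) : Set (Fin q → ℝ) :=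
  insert 0 {x | ∃ l : ℝ, 0 ≤ l ∧ ∃ b ∈ convexHull ℝ B, x = l • b}

namespace PointedCone

variable {𝕜 E : Type*} [Field 𝕜] [LinearOrder 𝕜] [IsStrictOrderedRing 𝕜]
  [AddCommGroup E] [Module 𝕜 E]

lemma neg_mem_hull_insert_or_exists_smul_eq_add {s : Set E} {y a b : E} {t : 𝕜}
    (hb : b ∈ hull 𝕜 (insert y s)) (hab : t • y = a + b) :
    -a ∈ hull 𝕜 (insert y s) ∨ ∃ r : 𝕜, 0 < r ∧ ∃ w ∈ hull 𝕜 s, r • y = a + w := by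
  obtain ⟨μ, w, hw, rfl⟩ := Submodule.mem_span_insert.mp hb
  rw [Nonneg.mk_smul] at hab
  rcases le_or_gt t μ with hμ | hμ
  · left
    have hneg : -a = (μ - t : 𝕜) • y + w := by
      rw [sub_smul, hab]; abel
    rw [hneg]
    exact add_mem (smul_mem _ (sub_nonneg.2 hμ) (subset_hull (mem_insert y s)))
      (Submodule.span_mono (subset_insert y s) hw)
  · right
    exact ⟨t - μ, sub_pos.2 hμ, w, hw, by rw [sub_smul, hab]; abel⟩

end PointedCone

open PointedCone

lemma coneOf_eq_hull {q : ℕ} (B : Set (Fin q → ℝ)) : coneOf B = hull ℝ B := by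
  apply Subset.antisymm
  · rintro x (rfl | ⟨l, hl, b, hb, rfl⟩)
    · exact zero_mem _
    · exact smul_mem _ hl (convexHull_min subset_hull (PointedCone.convex _) hb)
  · intro x hx
    obtain ⟨f, t, htB, -, rfl⟩ := Submodule.mem_span_iff_exists_finset_subset.mp hx
    set w : (Fin q → ℝ) → ℝ := fun a => f a
    have hw : ∀ a ∈ t, 0 ≤ w a := fun a _ => (f a).2
    have hsum : ∑ a ∈ t, f a • a = ∑ a ∈ t, w a • a := rfl
    rcases (Finset.sum_nonneg hw).eq_or_lt with hw0 | hwpos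
    · left
      rw [hsum, Finset.sum_eq_zero]
      intro a ha
      rw [(Finset.sum_eq_zero_iff_of_nonneg hw).1 hw0.symm a ha, zero_smul]
    · right
      refine ⟨∑ a ∈ t, w a, hwpos.le, t.centerMass w id,
        t.centerMass_mem_convexHull hw hwpos fun a ha => htB ha, ?_⟩
      rw [Finset.centerMass, smul_inv_smul₀ hwpos.ne', hsum]
      rfl

theorem redundant_direction_generator_general
    (q : ℕ) (B : Finset (Fin q → ℝ))
    (K : Set (Fin q → ℝ)) (hK : K = coneOf (B : Set (Fin q → ℝ)))
    (C : Set (Fin q → ℝ)) (hCK : C ⊆ K)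
    (hCcone : ∀ c ∈ C, ∀ l : ℝ, 0 ≤ l → l • c ∈ C)
    (hLC : (K ∩ (-K)) ∩ C = {0})
    (y : Fin q → ℝ) (hy : y ∈ B)
    (z c : Fin q → ℝ) (hz : z ∈ K) (hc : c ∈ C \ {0}) (hyzc : y = z + c)
    (hyL : y ∉ (K ∩ (-K)) + (C \ {0})) :
    y ∈ coneOf ((B : Set (Fin q → ℝ)) \ {y}) := by
  rw [coneOf_eq_hull, ← insert_eq_of_mem (Finset.mem_coe.2 hy), ← insert_sdiff_singleton]
    at hK
  subst hK
  set S := (B : Set (Fin q → ℝ)) \ {y}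
  obtain ⟨hcC, hc0⟩ := hc
  rcases neg_mem_hull_insert_or_exists_smul_eq_add (t := (1 : ℝ)) hz
      (by rw [one_smul, hyzc, add_comm]) with hneg | ⟨t, ht, z₁, hz₁, htz⟩
  · exact (hc0 (hLC ▸ ⟨⟨hCK hcC, hneg⟩, hcC⟩)).elim
  rcases neg_mem_hull_insert_or_exists_smul_eq_add (hCK hcC)
      (htz.trans (add_comm c z₁)) with hneg | ⟨r, hr, w, hw, hrw⟩
  · have hL : t⁻¹ • z₁ ∈ (hull ℝ (insert y S) : Set _) ∩ -(hull ℝ (insert y S) : Set _) := by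
      refine ⟨smul_mem _ (inv_nonneg.2 ht.le) (Submodule.span_mono (subset_insert y S) hz₁), ?_⟩
      rw [mem_neg, ← smul_neg]
      exact smul_mem _ (inv_nonneg.2 ht.le) hneg
    have hC : t⁻¹ • c ∈ C \ {0} :=
      ⟨hCcone c hcC _ (inv_nonneg.2 ht.le), smul_ne_zero (inv_ne_zero ht.ne') hc0⟩
    have hsum : t⁻¹ • z₁ + t⁻¹ • c = y := by
      rw [← smul_add, add_comm, ← htz, inv_smul_smul₀ ht.ne']
    exact (hyL (mem_add.2 ⟨_, hL, _, hC, hsum⟩)).elim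
  · rw [coneOf_eq_hull]
    exact (smul_mem_iff _ hr).1 (hrw ▸ add_mem hz₁ hw)

theorem redundant_direction_generator
    (q : ℕ) (B : Finset (Fin q → ℝ)) (hB0 : (0 : Fin q → ℝ) ∉ B)
    (K : Set (Fin q → ℝ)) (hK : K = coneOf (B : Set (Fin q → ℝ)))
    (C : Set (Fin q → ℝ)) (hCK : C ⊆ K)
    (hCcv : Convex ℝ C) (hCcone : ∀ c ∈ C, ∀ l : ℝ, 0 ≤ l → l • c ∈ C)
    (hLC : (K ∩ (-K)) ∩ C = {0})
    (y : Fin q → ℝ) (hy : y ∈ B)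
    (z c : Fin q → ℝ) (hz : z ∈ K) (hc : c ∈ C \ {0}) (hyzc : y = z + c)
    (hyL : y ∉ (K ∩ (-K)) + (C \ {0})) :
    y ∈ coneOf ((B : Set (Fin q → ℝ)) \ {y}) :=
  redundant_direction_generator_general q B K hK C hCK hCcone hLC y hy z c hz hc hyzc hyL
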